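/- The quantity β(Λ_m, Λ_{m'}) can be expressed basis-independently: β(Λ_m, Λ_{m'}) = n·Cov(ŝ_m(ξ), ŝ_{m'}(ξ)) − (n+1)·Cov(s_m(ξ), s_{m'}(ξ)), where ξ is an independent copy of ξ_1 and the covariance is over both ξ and the sample. Consequently β(m,m') := β(Λ_m,Λ_m) + β(Λ_{m'},Λ_{m'}) − 2β(Λ_m,Λ_{m'}) = n·Var((ŝ_m − ŝ_{m'})(ξ)) − (n+1)·Var((s_m − s_{m'})(ξ)). -/

import Mathlib

/-! Each term of `ŝ_m(ξ) = ∑_λ (P_n ψ_λ) ψ_λ(ξ)` is a function of the sample times a function of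
the independent copy `ξ`, so covariances of such terms factor as
`Cov(a ε, b η) = (Cov(a, b) + E a E b) (Cov(ε, η) + E ε E η) - E a E b E ε E η`.
Since `Cov(P_n f, P_n g) = Cov(f, g) / n` while `s_m` has deterministic coefficients `P ψ_λ`,
in `n Cov(ŝ_m(ξ), ŝ_{m'}(ξ)) - (n + 1) Cov(s_m(ξ), s_{m'}(ξ))` the `(λ, λ')` term collapses to
`Cov(ψ_λ, ψ_λ')²`. The variance identity then follows by bilinearity of the covariance. -/

open Finset MeasureTheory

/-- Empirical mean of `f` over the sample points indexed by `A`. -/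
noncomputable def emp {X : Type*} {n : ℕ} (ξ : Fin n → X) (A : Finset (Fin n))
    (f : X → ℝ) : ℝ :=
  (A.card : ℝ)⁻¹ * ∑ i ∈ A, f (ξ i)

open ProbabilityTheory

lemma emp_univ {X : Type*} {n : ℕ} (ξ : Fin n → X) (f : X → ℝ) :
    emp ξ univ f = (n : ℝ)⁻¹ * ∑ i, f (ξ i) := by
  simp [emp]

section ProductCovariance

variable {α β : Type*} [MeasurableSpace α] [MeasurableSpace β] {μ : Measure α} {ν : Measure β}

lemma MeasureTheory.MemLp.mul_prod [IsFiniteMeasure μ] [IsFiniteMeasure ν] {f : α → ℝ}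
    {g : β → ℝ} (hf : MemLp f 2 μ) (hg : MemLp g 2 ν) :
    MemLp (fun z : α × β => f z.1 * g z.2) 2 (μ.prod ν) := by
  refine (memLp_two_iff_integrable_sq ((hf.comp_fst ν).1.mul (hg.comp_snd μ).1)).2 ?_
  simpa only [Pi.mul_apply, mul_pow] using hf.integrable_sq.mul_prod hg.integrable_sq

lemma covariance_mul_prod [IsProbabilityMeasure μ] [IsProbabilityMeasure ν]
    {a b : α → ℝ} {ε η : β → ℝ}
    (ha : MemLp a 2 μ) (hb : MemLp b 2 μ) (hε : MemLp ε 2 ν) (hη : MemLp η 2 ν) :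
    cov[fun z => a z.1 * ε z.2, fun z => b z.1 * η z.2; μ.prod ν]
      = (cov[a, b; μ] + μ[a] * μ[b]) * (cov[ε, η; ν] + ν[ε] * ν[η])
        - μ[a] * μ[b] * (ν[ε] * ν[η]) := by
  have hprod : (fun z : α × β => a z.1 * ε z.2 * (b z.1 * η z.2))
      = fun z => (a z.1 * b z.1) * (ε z.2 * η z.2) := by
    ext z; ring
  rw [covariance_eq_sub (ha.mul_prod hε) (hb.mul_prod hη),
    covariance_eq_sub ha hb, covariance_eq_sub hε hη]
  simp only [Pi.mul_apply]
  rw [hprod, integral_prod_mul (fun x => a x * b x) (fun y => ε y * η y),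
    integral_prod_mul a ε, integral_prod_mul b η]
  ring

end ProductCovariance

section EmpiricalMean

variable {X : Type*} [MeasurableSpace X] {P : Measure X} [IsProbabilityMeasure P] {n : ℕ}
  {f g : X → ℝ}

lemma MeasureTheory.MemLp.comp_eval {ι : Type*} [Fintype ι] {p : ENNReal} (hf : MemLp f p P)
    (i : ι) : MemLp (fun ξ : ι → X => f (ξ i)) p (Measure.pi fun _ => P) :=
  hf.comp_measurePreserving (measurePreserving_eval _ i)

lemma memLp_emp (hf : MemLp f 2 P) :
    MemLp (fun ξ : Fin n → X => emp ξ univ f) 2 (Measure.pi fun _ => P) := by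
  simp_rw [emp_univ]
  exact (memLp_finsetSum _ fun i _ => hf.comp_eval i).const_mul _

lemma integral_emp (hn : 0 < n) (hf : MemLp f 2 P) :
    ∫ ξ, emp ξ univ f ∂(Measure.pi fun _ : Fin n => P) = ∫ x, f x ∂P := by
  simp_rw [emp_univ]
  rw [integral_const_mul, integral_finsetSum _ fun i _ => (hf.comp_eval i).integrable one_le_two]
  simp_rw [integral_comp_eval (μ := fun _ : Fin n => P) hf.1, sum_const, card_univ,
    Fintype.card_fin, nsmul_eq_mul]
  field_simp

lemma covariance_emp (hf : MemLp f 2 P) (hg : MemLp g 2 P) :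
    cov[fun ξ => emp ξ univ f, fun ξ => emp ξ univ g; Measure.pi fun _ : Fin n => P]
      = (n : ℝ)⁻¹ * cov[f, g; P] := by
  have hcoord : ∀ i j : Fin n,
      cov[fun ξ => f (ξ i), fun ξ => g (ξ j); Measure.pi fun _ : Fin n => P]
        = if i = j then cov[f, g; P] else 0 := by
    intro i j
    split_ifs with hij
    · subst hij
      rw [covariance_eq_sub (hf.comp_eval i) (hg.comp_eval i), covariance_eq_sub hf hg]
      simp only [Pi.mul_apply]
      rw [integral_comp_eval (μ := fun _ : Fin n => P) (f := fun x => f x * g x) (hf.1.mul hg.1),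
        integral_comp_eval (μ := fun _ : Fin n => P) hf.1,
        integral_comp_eval (μ := fun _ : Fin n => P) hg.1]
    · -- the pairs `(f, g)` evaluated at distinct sample points are independent
      have hpair := (iIndepFun_pi (X := fun _ x => (f x, g x))
        fun _ => hf.1.aemeasurable.prodMk hg.1.aemeasurable).indepFun hij
      exact (hpair.comp measurable_fst measurable_snd).covariance_eq_zero
        (hf.comp_eval i) (hg.comp_eval j)
  have hsum := covariance_fun_sum_fun_sum (hf.comp_eval (ι := Fin n)) (hg.comp_eval (ι := Fin n))
  beta_reduce at hsum
  simp_rw [emp_univ]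
  rw [covariance_const_mul_left, covariance_const_mul_right, hsum]
  simp_rw [hcoord, sum_ite_eq, mem_univ, if_true, sum_const, card_univ, Fintype.card_fin,
    nsmul_eq_mul]
  rcases n.eq_zero_or_pos with rfl | hn
  · simp
  · field_simp

end EmpiricalMean

section ProjectionEstimator

variable {X : Type*} [MeasurableSpace X] {P : Measure X} [IsProbabilityMeasure P] {n : ℕ}
  {Λ Λ' : Type*} [Fintype Λ] [Fintype Λ'] {ψ : Λ → X → ℝ} {φ : Λ' → X → ℝ}

lemma memLp_projectionEstimator (hψ : ∀ l, MemLp (ψ l) 2 P) :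
    MemLp (fun ω : (Fin n → X) × X => ∑ l, emp ω.1 univ (ψ l) * ψ l ω.2) 2
      ((Measure.pi fun _ => P).prod P) :=
  memLp_finsetSum _ fun l _ => (memLp_emp (hψ l)).mul_prod (hψ l)

lemma memLp_projection (hψ : ∀ l, MemLp (ψ l) 2 P) :
    MemLp (fun ω : (Fin n → X) × X => ∑ l, (∫ x, ψ l x ∂P) * ψ l ω.2) 2
      ((Measure.pi fun _ => P).prod P) :=
  memLp_finsetSum _ fun l _ => (memLp_const (∫ x, ψ l x ∂P)).mul_prod (hψ l)

lemma sum_sq_covariance_eq (hn : 0 < n) (hψ : ∀ l, MemLp (ψ l) 2 P)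
    (hφ : ∀ l, MemLp (φ l) 2 P) :
    ∑ l, ∑ l', ((∫ x, ψ l x * φ l' x ∂P) - (∫ x, ψ l x ∂P) * ∫ x, φ l' x ∂P) ^ 2
      = n * cov[fun ω : (Fin n → X) × X => ∑ l, emp ω.1 univ (ψ l) * ψ l ω.2,
          fun ω => ∑ l, emp ω.1 univ (φ l) * φ l ω.2; (Measure.pi fun _ => P).prod P]
        - (n + 1) * cov[fun ω : (Fin n → X) × X => ∑ l, (∫ x, ψ l x ∂P) * ψ l ω.2,
          fun ω => ∑ l, (∫ x, φ l x ∂P) * φ l ω.2; (Measure.pi fun _ => P).prod P] := by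
  have hcov (l : Λ) (l' : Λ') :
      (∫ x, ψ l x * φ l' x ∂P) - (∫ x, ψ l x ∂P) * ∫ x, φ l' x ∂P = cov[ψ l, φ l'; P] :=
    (covariance_eq_sub (hψ l) (hφ l')).symm
  have hest := covariance_fun_sum_fun_sum
    (fun l => (memLp_emp (n := n) (hψ l)).mul_prod (hψ l))
    (fun l => (memLp_emp (n := n) (hφ l)).mul_prod (hφ l))
  have hproj := covariance_fun_sum_fun_sum
    (fun l => (memLp_const (∫ x, ψ l x ∂P)).mul_prod (μ := Measure.pi fun _ : Fin n => P) (hψ l))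
    (fun l => (memLp_const (∫ x, φ l x ∂P)).mul_prod (μ := Measure.pi fun _ : Fin n => P) (hφ l))
  beta_reduce at hest hproj
  simp_rw [hcov]
  rw [hest, hproj, mul_sum, mul_sum, ← sum_sub_distrib]
  refine sum_congr rfl fun l _ => ?_
  rw [mul_sum, mul_sum, ← sum_sub_distrib]
  refine sum_congr rfl fun l' _ => ?_
  rw [covariance_mul_prod (memLp_emp (hψ l)) (memLp_emp (hφ l')) (hψ l) (hφ l'),
    covariance_mul_prod (memLp_const _) (memLp_const _) (hψ l) (hφ l'),
    covariance_emp (hψ l) (hφ l'), integral_emp hn (hψ l), integral_emp hn (hφ l'),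
    covariance_const_left]
  simp only [integral_const, probReal_univ, one_smul]
  field_simp
  ring

end ProjectionEstimator

/-- Basis-independent expression of `β(Λ_m, Λ_{m'})`:
`β(Λ_m,Λ_{m'}) = n Cov(ŝ_m(ξ), ŝ_{m'}(ξ)) − (n+1) Cov(s_m(ξ), s_{m'}(ξ))`, where
`ξ` is an independent copy of `ξ₁` and the covariance is over both `ξ` and the
sample; consequently
`β(m,m') = n Var((ŝ_m − ŝ_{m'})(ξ)) − (n+1) Var((s_m − s_{m'})(ξ))`. -/
theorem stmt13 {X : Type*} [MeasurableSpace X] (P : Measure X) [IsProbabilityMeasure P]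
    {n : ℕ} (hn : 0 < n)
    {Λ Λ' : Type*} [Fintype Λ] [Fintype Λ']
    (ψ : Λ → X → ℝ) (φ : Λ' → X → ℝ)
    (hψ : ∀ l, MemLp (ψ l) 2 P) (hφ : ∀ l, MemLp (φ l) 2 P) :
    let Q : Measure ((Fin n → X) × X) := (Measure.pi fun _ => P).prod P
    let c : Λ → ℝ := fun l => ∫ x, ψ l x ∂P
    let c' : Λ' → ℝ := fun l => ∫ x, φ l x ∂P
    let β : ℝ := ∑ l, ∑ l', ((∫ x, ψ l x * φ l' x ∂P) - c l * c' l') ^ 2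
    let β₁₁ : ℝ := ∑ l, ∑ l', ((∫ x, ψ l x * ψ l' x ∂P) - c l * c l') ^ 2
    let β₂₂ : ℝ := ∑ l, ∑ l', ((∫ x, φ l x * φ l' x ∂P) - c' l * c' l') ^ 2
    let shat : (Fin n → X) × X → ℝ := fun ω =>
      ∑ l, emp ω.1 Finset.univ (ψ l) * ψ l ω.2
    let shat' : (Fin n → X) × X → ℝ := fun ω =>
      ∑ l, emp ω.1 Finset.univ (φ l) * φ l ω.2
    let sm : (Fin n → X) × X → ℝ := fun ω => ∑ l, c l * ψ l ω.2
    let sm' : (Fin n → X) × X → ℝ := fun ω => ∑ l, c' l * φ l ω.2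
    let covQ : ((Fin n → X) × X → ℝ) → ((Fin n → X) × X → ℝ) → ℝ := fun F G =>
      (∫ ω, F ω * G ω ∂Q) - (∫ ω, F ω ∂Q) * (∫ ω, G ω ∂Q)
    let varQ : ((Fin n → X) × X → ℝ) → ℝ := fun F =>
      (∫ ω, (F ω) ^ 2 ∂Q) - (∫ ω, F ω ∂Q) ^ 2
    β = n * covQ shat shat' - ((n : ℝ) + 1) * covQ sm sm' ∧
    β₁₁ + β₂₂ - 2 * β =
      n * varQ (fun ω => shat ω - shat' ω)
        - ((n : ℝ) + 1) * varQ (fun ω => sm ω - sm' ω) := by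
  intro Q c c' β β₁₁ β₂₂ shat shat' sm sm' covQ varQ
  have hshat : MemLp shat 2 Q := memLp_projectionEstimator hψ
  have hshat' : MemLp shat' 2 Q := memLp_projectionEstimator hφ
  have hsm : MemLp sm 2 Q := memLp_projection hψ
  have hsm' : MemLp sm' 2 Q := memLp_projection hφ
  have hcovQ {F G} (hF : MemLp F 2 Q) (hG : MemLp G 2 Q) : covQ F G = cov[F, G; Q] := by
    simp only [covQ, covariance_eq_sub hF hG, Pi.mul_apply]
  have hvarQ {F} (hF : MemLp F 2 Q) : varQ F = Var[F; Q] := by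
    simp only [varQ, variance_eq_sub hF, Pi.pow_apply]
  have h₁₂ : β = n * cov[shat, shat'; Q] - (n + 1) * cov[sm, sm'; Q] :=
    sum_sq_covariance_eq hn hψ hφ
  have h₁₁ : β₁₁ = n * Var[shat; Q] - (n + 1) * Var[sm; Q] := by
    rw [← covariance_self hshat.aemeasurable, ← covariance_self hsm.aemeasurable]
    exact sum_sq_covariance_eq hn hψ hψ
  have h₂₂ : β₂₂ = n * Var[shat'; Q] - (n + 1) * Var[sm'; Q] := by
    rw [← covariance_self hshat'.aemeasurable, ← covariance_self hsm'.aemeasurable]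
    exact sum_sq_covariance_eq hn hφ hφ
  refine ⟨by rw [h₁₂, hcovQ hshat hshat', hcovQ hsm hsm'], ?_⟩
  rw [hvarQ (F := fun ω => shat ω - shat' ω) (hshat.sub hshat'),
    hvarQ (F := fun ω => sm ω - sm' ω) (hsm.sub hsm'), variance_fun_sub hshat hshat',
    variance_fun_sub hsm hsm', h₁₁, h₂₂, h₁₂]
  ring
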